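/- Let H, K be pre-Hilbert spaces over C[[λ]] and A : H → K an adjointable map. Then A maps H₀ into K₀ (zero-length vectors to zero-length vectors), so A descends to a map 𝔠A : H/H₀ → K/K₀, and 𝔠A is adjointable with (𝔠A)* = 𝔠(A*). -/

import Mathlib

/-- An ordered ring in the sense of the paper. -/
structure PosCone (R : Type) [CommRing R] (P : Set R) : Prop where
  trichotomy : ∀ a : R, a ∈ P ∨ a = 0 ∨ -a ∈ P
  zero_not_mem : (0 : R) ∉ P
  not_neg_mem : ∀ a : R, a ∈ P → -a ∉ P
  add_mem : ∀ a b : R, a ∈ P → b ∈ P → a + b ∈ P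
  mul_mem : ∀ a b : R, a ∈ P → b ∈ P → a * b ∈ P

/-- The ring `C = R[i] = R(i)` obtained from `R` by adjoining a square root
of `-1`: elements are formal combinations `a + i b`. -/
@[ext] structure Cx (R : Type) : Type where
  re : R
  im : R

namespace Cx
variable {R : Type} [CommRing R]

instance : Zero (Cx R) := ⟨⟨0, 0⟩⟩
instance : One (Cx R) := ⟨⟨1, 0⟩⟩
instance : Add (Cx R) := ⟨fun z w => ⟨z.re + w.re, z.im + w.im⟩⟩
instance : Neg (Cx R) := ⟨fun z => ⟨-z.re, -z.im⟩⟩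
instance : Mul (Cx R) := ⟨fun z w => ⟨z.re * w.re - z.im * w.im, z.re * w.im + z.im * w.re⟩⟩

@[simp] theorem zero_re : (0 : Cx R).re = 0 := rfl
@[simp] theorem zero_im : (0 : Cx R).im = 0 := rfl
@[simp] theorem one_re : (1 : Cx R).re = 1 := rfl
@[simp] theorem one_im : (1 : Cx R).im = 0 := rfl
@[simp] theorem add_re (z w : Cx R) : (z + w).re = z.re + w.re := rfl
@[simp] theorem add_im (z w : Cx R) : (z + w).im = z.im + w.im := rfl
@[simp] theorem neg_re (z : Cx R) : (-z).re = -z.re := rfl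
@[simp] theorem neg_im (z : Cx R) : (-z).im = -z.im := rfl
@[simp] theorem mul_re (z w : Cx R) : (z * w).re = z.re * w.re - z.im * w.im := rfl
@[simp] theorem mul_im (z w : Cx R) : (z * w).im = z.re * w.im + z.im * w.re := rfl

instance : CommRing (Cx R) where
  add_assoc a b c := by ext <;> simp <;> ring
  zero_add a := by ext <;> simp
  add_zero a := by ext <;> simp
  add_comm a b := by ext <;> simp <;> ring
  left_distrib a b c := by ext <;> simp <;> ring
  right_distrib a b c := by ext <;> simp <;> ring
  zero_mul a := by ext <;> simp
  mul_zero a := by ext <;> simp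
  mul_assoc a b c := by ext <;> simp <;> ring
  one_mul a := by ext <;> simp
  mul_one a := by ext <;> simp
  neg_add_cancel a := by ext <;> simp
  mul_comm a b := by ext <;> simp <;> ring
  nsmul := nsmulRec
  zsmul := zsmulRec

/-- Complex conjugation `a + ib ↦ a - ib` on `C = R[i]`. -/
def conj (z : Cx R) : Cx R := ⟨z.re, -z.im⟩

/-- The imaginary unit `i` of `C = R[i]`. -/
def I : Cx R := ⟨0, 1⟩

end Cx

/-- The positive elements of `C = R[i]`: the elements of `P ⊆ R ⊆ C`. -/
def CxPos {R : Type} [CommRing R] (P : Set R) : Set (Cx R) :=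
  {z | z.im = 0 ∧ z.re ∈ P}

/-- The nonnegative elements of `C = R[i]`: elements of `P ∪ {0} ⊆ R ⊆ C`. -/
def CxNonneg {R : Type} [CommRing R] (P : Set R) : Set (Cx R) :=
  {z | z.im = 0 ∧ (z.re = 0 ∨ z.re ∈ P)}

/-- A pre-Hilbert space over `K` (with conjugation `conj` and positivity set
`Pos`): a `K`-module with a Hermitian, positive-definite inner product which
is `K`-linear in the second argument. -/
structure PreHilbert (K : Type) [CommRing K] (conj : K → K) (Pos : Set K)
    (H : Type) [AddCommGroup H] [Module K H] : Type where
  inner : H → H → K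
  inner_add_right : ∀ φ ψ χ : H, inner φ (ψ + χ) = inner φ ψ + inner φ χ
  inner_smul_right : ∀ (z : K) (φ ψ : H), inner φ (z • ψ) = z * inner φ ψ
  inner_conj : ∀ φ ψ : H, inner φ ψ = conj (inner ψ φ)
  inner_pos : ∀ φ : H, φ ≠ 0 → inner φ φ ∈ Pos

/-- Coefficientwise complex conjugation on `C[[λ]]`. -/
noncomputable def psConj {R : Type} [CommRing R] (f : PowerSeries (Cx R)) :
    PowerSeries (Cx R) :=
  PowerSeries.mk fun n => Cx.conj (PowerSeries.coeff (R := Cx R) n f)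

/-- The positive elements of `C[[λ]] = (R[[λ]])[i]`: the elements of
`R[[λ]]` (all imaginary parts vanish) whose lowest nonvanishing coefficient
is positive. -/
def PSPos {R : Type} [CommRing R] (P : Set R) : Set (PowerSeries (Cx R)) :=
  {f | (∀ m : ℕ, (PowerSeries.coeff (R := Cx R) m f).im = 0) ∧
    ∃ n : ℕ, (∀ m < n, (PowerSeries.coeff (R := Cx R) m f).re = 0) ∧
      (PowerSeries.coeff (R := Cx R) n f).re ∈ P}

/-!
If `⟨φ, φ⟩` vanishes at `λ = 0`, so does `⟨φ, ψ⟩` for every `ψ`: otherwise put `a = ⟨φ, φ⟩`,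
`b = ⟨φ, ψ⟩`, `c = ⟨ψ, ψ⟩` and `χ = a ψ - b φ`, so that `⟨χ, χ⟩ = a (a c - b b̄)`. The factor `a c - b b̄`
has constant term `-|b₀|² < 0`, so the lowest nonvanishing coefficient of `⟨χ, χ⟩` is the lowest one
of `a` times a negative number, contradicting positivity. Given this Cauchy–Schwarz inequality at
order zero, `⟨Aφ, Aφ⟩ = ⟨φ, A*Aφ⟩` shows that `A` preserves null vectors, and likewise `A*`, so both
descend to the quotients, where the adjoint relation persists at `λ = 0`.
-/

open PowerSeries

namespace Cx

variable {R : Type} [CommRing R]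

def conjHom : Cx R →+* Cx R where
  toFun := conj
  map_one' := by ext <;> simp [conj]
  map_mul' z w := by ext <;> simp [conj]; ring
  map_zero' := by ext <;> simp [conj]
  map_add' z w := by ext <;> simp [conj]; ring

def normSq (z : Cx R) : R := z.re * z.re + z.im * z.im

theorem mul_conj (z : Cx R) : z * conj z = ⟨normSq z, 0⟩ := by
  ext <;> simp [conj, normSq]; ring

end Cx

namespace PosCone

variable {R : Type} [CommRing R] {P : Set R}

theorem mul_self_mem (hP : PosCone R P) {x : R} (hx : x ≠ 0) : x * x ∈ P := by
  rcases hP.trichotomy x with h | h | h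
  · exact hP.mul_mem _ _ h h
  · exact absurd h hx
  · simpa using hP.mul_mem _ _ h h

theorem normSq_mem (hP : PosCone R P) {z : Cx R} (hz : z ≠ 0) : Cx.normSq z ∈ P := by
  by_cases hre : z.re = 0
  · have him : z.im ≠ 0 := fun him => hz (by ext <;> simp [hre, him])
    simpa [Cx.normSq, hre] using hP.mul_self_mem him
  · by_cases him : z.im = 0
    · simpa [Cx.normSq, him] using hP.mul_self_mem hre
    · exact hP.add_mem _ _ (hP.mul_self_mem hre) (hP.mul_self_mem him)

end PosCone

section psConj

variable {R : Type} [CommRing R]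

theorem psConj_eq_map (f : PowerSeries (Cx R)) : psConj f = map Cx.conjHom f :=
  PowerSeries.ext fun n => by simp [psConj, Cx.conjHom]

@[simp] theorem coeff_psConj (n : ℕ) (f : PowerSeries (Cx R)) :
    coeff n (psConj f) = Cx.conj (coeff n f) := by
  simp [psConj]

theorem psConj_zero : psConj (0 : PowerSeries (Cx R)) = 0 := by
  simp [psConj_eq_map]

theorem psConj_add (f g : PowerSeries (Cx R)) : psConj (f + g) = psConj f + psConj g := by
  simp [psConj_eq_map]

theorem psConj_neg (f : PowerSeries (Cx R)) : psConj (-f) = -psConj f := by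
  simp [psConj_eq_map]

theorem psConj_mul (f g : PowerSeries (Cx R)) : psConj (f * g) = psConj f * psConj g := by
  simp [psConj_eq_map]

theorem coeff_zero_mul_psConj_self (f : PowerSeries (Cx R)) :
    coeff 0 (f * psConj f) = ⟨Cx.normSq (coeff 0 f), 0⟩ := by
  rw [← Cx.mul_conj, ← coeff_psConj, coeff_zero_eq_constantCoeff_apply,
    coeff_zero_eq_constantCoeff_apply, coeff_zero_eq_constantCoeff_apply, map_mul]

end psConj

namespace PSPos

variable {R : Type} [CommRing R] {P : Set R}

theorem exists_eq_X_pow_mul {f : PowerSeries (Cx R)} (hf : f ∈ PSPos P) :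
    ∃ (k : ℕ) (g : PowerSeries (Cx R)), f = X ^ k * g ∧ (coeff 0 g).im = 0 ∧ (coeff 0 g).re ∈ P := by
  obtain ⟨him, k, hlow, hk⟩ := hf
  obtain ⟨g, rfl⟩ : (X : PowerSeries (Cx R)) ^ k ∣ f :=
    X_pow_dvd_iff.2 fun m hm => Cx.ext (hlow m hm) (him m)
  have hcoeff : coeff k (X ^ k * g) = coeff 0 g := by simpa using coeff_X_pow_mul g k 0
  exact ⟨k, g, rfl, hcoeff ▸ him k, hcoeff ▸ hk⟩

theorem re_coeff_nonneg_of_X_pow_dvd (hP : PosCone R P) {f : PowerSeries (Cx R)}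
    (hf : f = 0 ∨ f ∈ PSPos P) {k : ℕ} (hk : (X : PowerSeries (Cx R)) ^ k ∣ f) :
    (coeff k f).re = 0 ∨ (coeff k f).re ∈ P := by
  rcases hf with rfl | ⟨-, n, hlow, hn⟩
  · simp
  rcases lt_trichotomy n k with hnk | rfl | hnk
  · rw [X_pow_dvd_iff.1 hk n hnk] at hn
    exact absurd hn hP.zero_not_mem
  · exact Or.inr hn
  · exact Or.inl (hlow k hnk)

theorem mul_not_nonneg_of_neg_re_coeff_zero (hP : PosCone R P) {a g : PowerSeries (Cx R)} (ha : a ∈ PSPos P)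
    (hg : -(coeff 0 g).re ∈ P) :
    ¬(a * g = 0 ∨ a * g ∈ PSPos P) := by
  obtain ⟨k, a', rfl, ha'_im, ha'_re⟩ := exists_eq_X_pow_mul ha
  intro hnonneg
  have hcoeff : (coeff k (X ^ k * a' * g)).re = -((coeff 0 a').re * -(coeff 0 g).re) := by
    have h : coeff k (X ^ k * a' * g) = coeff 0 a' * coeff 0 g := by
      simpa [mul_assoc, coeff_zero_eq_constantCoeff_apply] using coeff_X_pow_mul (a' * g) k 0
    rw [h, Cx.mul_re, ha'_im]
    ring
  have hmem := hP.mul_mem _ _ ha'_re hg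
  rcases re_coeff_nonneg_of_X_pow_dvd hP hnonneg (dvd_mul_of_dvd_left (dvd_mul_right _ _) _)
    with h | h <;> rw [hcoeff] at h
  · exact hP.zero_not_mem (neg_eq_zero.1 h ▸ hmem)
  · exact hP.not_neg_mem _ hmem h

end PSPos

namespace PreHilbert

variable {R : Type} [CommRing R] {P : Set R}
  {H K : Type} [AddCommGroup H] [Module (PowerSeries (Cx R)) H]
  [AddCommGroup K] [Module (PowerSeries (Cx R)) K]
  (hH : PreHilbert (PowerSeries (Cx R)) psConj (PSPos P) H)
  (hK : PreHilbert (PowerSeries (Cx R)) psConj (PSPos P) K)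

theorem inner_zero_right (φ : H) : hH.inner φ 0 = 0 := by
  simpa using hH.inner_smul_right 0 φ φ

theorem inner_zero_left (ψ : H) : hH.inner 0 ψ = 0 := by
  rw [hH.inner_conj, inner_zero_right, psConj_zero]

theorem inner_add_left (φ ψ χ : H) : hH.inner (φ + ψ) χ = hH.inner φ χ + hH.inner ψ χ := by
  rw [hH.inner_conj, hH.inner_add_right, psConj_add, ← hH.inner_conj, ← hH.inner_conj]

theorem inner_smul_left (z : PowerSeries (Cx R)) (φ ψ : H) :
    hH.inner (z • φ) ψ = psConj z * hH.inner φ ψ := by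
  rw [hH.inner_conj, hH.inner_smul_right, psConj_mul, ← hH.inner_conj]

theorem inner_self_nonneg (φ : H) : hH.inner φ φ = 0 ∨ hH.inner φ φ ∈ PSPos P := by
  by_cases hφ : φ = 0
  · exact Or.inl (hφ ▸ inner_zero_left hH 0)
  · exact Or.inr (hH.inner_pos φ hφ)

theorem inner_self_smul_add_smul (φ ψ : H) :
    hH.inner (hH.inner φ φ • ψ + (-hH.inner φ ψ) • φ) (hH.inner φ φ • ψ + (-hH.inner φ ψ) • φ) =
      hH.inner φ φ * (hH.inner φ φ * hH.inner ψ ψ - hH.inner φ ψ * psConj (hH.inner φ ψ)) := by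
  have hφφ : psConj (hH.inner φ φ) = hH.inner φ φ := (hH.inner_conj φ φ).symm
  simp only [inner_add_left, inner_smul_left, hH.inner_add_right, hH.inner_smul_right, hφφ,
    psConj_neg, ← hH.inner_conj ψ φ]
  ring

theorem coeff_zero_inner_eq_zero (hP : PosCone R P) {φ : H}
    (hφ : coeff 0 (hH.inner φ φ) = 0) (ψ : H) : coeff 0 (hH.inner φ ψ) = 0 := by
  by_contra hb
  have hφ_ne : φ ≠ 0 := by
    rintro rfl
    simp [inner_zero_left] at hb
  have hg : coeff 0 (hH.inner φ φ * hH.inner ψ ψ - hH.inner φ ψ * psConj (hH.inner φ ψ)) =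
      ⟨-Cx.normSq (coeff 0 (hH.inner φ ψ)), 0⟩ := by
    rw [map_sub, coeff_zero_mul_psConj_self, coeff_zero_eq_constantCoeff_apply, map_mul,
      ← coeff_zero_eq_constantCoeff_apply, hφ, zero_mul, zero_sub]
    ext <;> simp
  refine PSPos.mul_not_nonneg_of_neg_re_coeff_zero hP (hH.inner_pos φ hφ_ne) ?_
    (inner_self_smul_add_smul hH φ ψ ▸ hH.inner_self_nonneg _)
  simpa [hg] using hP.normSq_mem hb

theorem inner_symm_of_adjoint {A : H → K} {B : K → H}
    (hAB : ∀ φ ψ, hK.inner (A φ) ψ = hH.inner φ (B ψ)) (ψ : K) (φ : H) :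
    hH.inner (B ψ) φ = hK.inner ψ (A φ) := by
  rw [hH.inner_conj, ← hAB, ← hK.inner_conj]

theorem coeff_zero_inner_self_apply_eq_zero (hP : PosCone R P) {A : H → K} {B : K → H}
    (hAB : ∀ φ ψ, hK.inner (A φ) ψ = hH.inner φ (B ψ)) {φ : H}
    (hφ : coeff 0 (hH.inner φ φ) = 0) : coeff 0 (hK.inner (A φ) (A φ)) = 0 := by
  rw [hAB]
  exact coeff_zero_inner_eq_zero hH hP hφ _

end PreHilbert

theorem classical_limit_adjointable_general (R : Type) [CommRing R]
    (P : Set R) (hP : PosCone R P)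
    (H K : Type) [AddCommGroup H] [Module (PowerSeries (Cx R)) H]
    [AddCommGroup K] [Module (PowerSeries (Cx R)) K]
    (hH : PreHilbert (PowerSeries (Cx R)) psConj (PSPos P) H)
    (hK : PreHilbert (PowerSeries (Cx R)) psConj (PSPos P) K)
    (A : H →ₗ[PowerSeries (Cx R)] K) (A' : K →ₗ[PowerSeries (Cx R)] H)
    (hA : ∀ (φ : H) (ψ : K), hK.inner (A φ) ψ = hH.inner φ (A' ψ))
    (SH : Submodule (PowerSeries (Cx R)) H)
    (hSH : ∀ φ : H, φ ∈ SH ↔ PowerSeries.coeff (R := Cx R) 0 (hH.inner φ φ) = 0)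
    (SK : Submodule (PowerSeries (Cx R)) K)
    (hSK : ∀ ψ : K, ψ ∈ SK ↔ PowerSeries.coeff (R := Cx R) 0 (hK.inner ψ ψ) = 0) :
    (∀ φ : H, PowerSeries.coeff (R := Cx R) 0 (hH.inner φ φ) = 0 →
        PowerSeries.coeff (R := Cx R) 0 (hK.inner (A φ) (A φ)) = 0) ∧
    (∃ (cA : (H ⧸ SH) →ₗ[PowerSeries (Cx R)] (K ⧸ SK))
        (cA' : (K ⧸ SK) →ₗ[PowerSeries (Cx R)] (H ⧸ SH)),
      (∀ φ : H, cA (Submodule.Quotient.mk φ) = Submodule.Quotient.mk (A φ)) ∧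
      (∀ ψ : K, cA' (Submodule.Quotient.mk ψ) = Submodule.Quotient.mk (A' ψ)) ∧
      (∀ (φ : H) (ψ : K),
        PowerSeries.coeff (R := Cx R) 0 (hK.inner (A φ) ψ)
          = PowerSeries.coeff (R := Cx R) 0 (hH.inner φ (A' ψ)))) := by
  have hA_null (φ : H) : coeff 0 (hH.inner φ φ) = 0 → coeff 0 (hK.inner (A φ) (A φ)) = 0 :=
    hH.coeff_zero_inner_self_apply_eq_zero hK hP hA
  have hA'_null (ψ : K) : coeff 0 (hK.inner ψ ψ) = 0 → coeff 0 (hH.inner (A' ψ) (A' ψ)) = 0 :=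
    hK.coeff_zero_inner_self_apply_eq_zero hH hP (hH.inner_symm_of_adjoint hK hA)
  refine ⟨hA_null,
    SH.mapQ SK A fun φ hφ => (hSK _).2 (hA_null φ ((hSH φ).1 hφ)),
    SK.mapQ SH A' fun ψ hψ => (hSH _).2 (hA'_null ψ ((hSK ψ).1 hψ)),
    fun _ => Submodule.mapQ_apply _ _ _ _, fun _ => Submodule.mapQ_apply _ _ _ _,
    fun φ ψ => by rw [hA]⟩

/-- an adjointable map `A : H → K` between pre-Hilbert spaces
over `C[[λ]]` maps zero-length vectors to zero-length vectors, hence descends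
to a map `𝔠A : H/H₀ → K/K₀` of the classical limits, and the descended map is
adjointable with `(𝔠A)* = 𝔠(A*)`. -/
theorem classical_limit_adjointable (R : Type) [CommRing R] [Nontrivial R]
    (P : Set R) (hP : PosCone R P)
    (H K : Type) [AddCommGroup H] [Module (PowerSeries (Cx R)) H]
    [AddCommGroup K] [Module (PowerSeries (Cx R)) K]
    (hH : PreHilbert (PowerSeries (Cx R)) psConj (PSPos P) H)
    (hK : PreHilbert (PowerSeries (Cx R)) psConj (PSPos P) K)
    (A : H →ₗ[PowerSeries (Cx R)] K) (A' : K →ₗ[PowerSeries (Cx R)] H)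
    (hA : ∀ (φ : H) (ψ : K), hK.inner (A φ) ψ = hH.inner φ (A' ψ))
    (SH : Submodule (PowerSeries (Cx R)) H)
    (hSH : ∀ φ : H, φ ∈ SH ↔ PowerSeries.coeff (R := Cx R) 0 (hH.inner φ φ) = 0)
    (SK : Submodule (PowerSeries (Cx R)) K)
    (hSK : ∀ ψ : K, ψ ∈ SK ↔ PowerSeries.coeff (R := Cx R) 0 (hK.inner ψ ψ) = 0) :
    (∀ φ : H, PowerSeries.coeff (R := Cx R) 0 (hH.inner φ φ) = 0 →
        PowerSeries.coeff (R := Cx R) 0 (hK.inner (A φ) (A φ)) = 0) ∧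
    (∃ (cA : (H ⧸ SH) →ₗ[PowerSeries (Cx R)] (K ⧸ SK))
        (cA' : (K ⧸ SK) →ₗ[PowerSeries (Cx R)] (H ⧸ SH)),
      (∀ φ : H, cA (Submodule.Quotient.mk φ) = Submodule.Quotient.mk (A φ)) ∧
      (∀ ψ : K, cA' (Submodule.Quotient.mk ψ) = Submodule.Quotient.mk (A' ψ)) ∧
      (∀ (φ : H) (ψ : K),
        PowerSeries.coeff (R := Cx R) 0 (hK.inner (A φ) ψ)
          = PowerSeries.coeff (R := Cx R) 0 (hH.inner φ (A' ψ)))) :=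
  classical_limit_adjointable_general R P hP H K hH hK A A' hA SH hSH SK hSK
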